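/- arXiv:1111.1877 — 4 statements merged into one kernel-verified Lean document; each statement's English description precedes it below -/
import Mathlib

section
/- Let B be a complex symmetric n×n matrix with positive definite imaginary part and let z = (p,q) ∈ ℂⁿ×ℂⁿ. Write (P,Q) := P_{J(B)}(z) = Re z + J(B) Im z ∈ ℝⁿ×ℝⁿ. Then Q is a critical point of the imaginary part of S(x) = p·(x−q) + ½(x−q)·B(x−q), i.e. Im(p + B(Q−q)) = 0, the gradient of S at Q equals P, i.e. p + B(Q−q) = P, and hence B(Q−q) = P − p. -/
open Matrix

noncomputable section

/-- The standard symplectic matrix `Ω = [[0, −I],[I, 0]]` on `ℝ²ⁿ`. -/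
def Omg (n : ℕ) : Matrix (Fin n ⊕ Fin n) (Fin n ⊕ Fin n) ℝ :=
  fromBlocks 0 (-1) 1 0

/-- Componentwise real part of a complex matrix. -/
def matRe {m k : Type*} (A : Matrix m k ℂ) : Matrix m k ℝ := A.map Complex.re

/-- Componentwise imaginary part of a complex matrix. -/
def matIm {m k : Type*} (A : Matrix m k ℂ) : Matrix m k ℝ := A.map Complex.im

/-- Componentwise real part of a complex vector. -/
def vecRe {m : Type*} (z : m → ℂ) : m → ℝ := fun i => (z i).re

/-- Componentwise imaginary part of a complex vector. -/
def vecIm {m : Type*} (z : m → ℂ) : m → ℝ := fun i => (z i).im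

/-- The `Ω`-compatible complex structure `J(B)` associated with a complex symmetric
matrix `B` with `Im B > 0`, in `n×n` block form. -/
def JB {n : ℕ} (B : Matrix (Fin n) (Fin n) ℂ) :
    Matrix (Fin n ⊕ Fin n) (Fin n ⊕ Fin n) ℝ :=
  fromBlocks (-(matRe B) * (matIm B)⁻¹) (matIm B + matRe B * (matIm B)⁻¹ * matRe B)
    (-(matIm B)⁻¹) ((matIm B)⁻¹ * matRe B)

/-- The projection `P_J(z) = Re z + J Im z` from `ℂ²ⁿ` to `ℝ²ⁿ`. -/
def PJ {n : ℕ} (J : Matrix (Fin n ⊕ Fin n) (Fin n ⊕ Fin n) ℝ)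
    (z : Fin n ⊕ Fin n → ℂ) : Fin n ⊕ Fin n → ℝ :=
  vecRe z + J *ᵥ vecIm z

section ReIm

variable {m : Type*}

@[simp] lemma vecRe_sub (v w : m → ℂ) : vecRe (v - w) = vecRe v - vecRe w := rfl
@[simp] lemma vecIm_sub (v w : m → ℂ) : vecIm (v - w) = vecIm v - vecIm w := rfl
@[simp] lemma vecRe_ofReal (x : m → ℝ) : vecRe (fun i => (x i : ℂ)) = x := rfl
@[simp] lemma vecIm_ofReal (x : m → ℝ) : vecIm (fun i => (x i : ℂ)) = 0 := by
  ext; simp [vecIm]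

lemma vec_ext {v w : m → ℂ} (hre : vecRe v = vecRe w) (him : vecIm v = vecIm w) : v = w :=
  funext fun i => Complex.ext (congrFun hre i) (congrFun him i)

variable [Fintype m]

lemma vecRe_mulVec (B : Matrix m m ℂ) (v : m → ℂ) :
    vecRe (B *ᵥ v) = matRe B *ᵥ vecRe v - matIm B *ᵥ vecIm v := by
  ext i
  simp [vecRe, vecIm, matRe, matIm, mulVec, dotProduct, Complex.mul_re, Finset.sum_sub_distrib]

lemma vecIm_mulVec (B : Matrix m m ℂ) (v : m → ℂ) :
    vecIm (B *ᵥ v) = matRe B *ᵥ vecIm v + matIm B *ᵥ vecRe v := by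
  ext i
  simp [vecRe, vecIm, matRe, matIm, mulVec, dotProduct, Complex.mul_im, Finset.sum_add_distrib]

end ReIm

lemma PJ_fromBlocks_sumElim {n : ℕ} (A₁₁ A₁₂ A₂₁ A₂₂ : Matrix (Fin n) (Fin n) ℝ)
    (p q : Fin n → ℂ) :
    PJ (fromBlocks A₁₁ A₁₂ A₂₁ A₂₂) (Sum.elim p q) =
      Sum.elim (vecRe p + (A₁₁ *ᵥ vecIm p + A₁₂ *ᵥ vecIm q))
        (vecRe q + (A₂₁ *ᵥ vecIm p + A₂₂ *ᵥ vecIm q)) := by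
  have : vecIm (Sum.elim p q) = Sum.elim (vecIm p) (vecIm q) := by
    ext (i | i) <;> rfl
  rw [PJ, this, fromBlocks_mulVec]
  ext (i | i) <;> rfl

/-- With `R = Re B`, `M = Im B`, the definition of `J(B)` makes `Q - q = M⁻¹(R Im q - Im p) - i Im q`,
so `M M⁻¹ = 1` cancels everything in `Im (B (Q - q))` except `-Im p`, while `Re (B (Q - q))` is
`P - Re p` term by term. -/
lemma mulVec_PJ_JB_inr_sub {n : ℕ} (B : Matrix (Fin n) (Fin n) ℂ) (hB : IsUnit (matIm B))
    (p q : Fin n → ℂ) :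
    B *ᵥ ((fun i => (PJ (JB B) (Sum.elim p q) (Sum.inr i) : ℂ)) - q) =
      (fun i => (PJ (JB B) (Sum.elim p q) (Sum.inl i) : ℂ)) - p := by
  have hinv : matIm B * (matIm B)⁻¹ = 1 := mul_nonsing_inv _ ((isUnit_iff_isUnit_det _).mp hB)
  simp only [JB, PJ_fromBlocks_sumElim, Sum.elim_inl, Sum.elim_inr]
  apply vec_ext
  · simp only [vecRe_mulVec, vecRe_sub, vecRe_ofReal, vecIm_ofReal, mulVec_add,
      mulVec_sub, mulVec_neg, mulVec_zero, add_mulVec, neg_mulVec, neg_mul, mulVec_mulVec, ← mul_assoc]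
    abel
  · simp only [vecIm_mulVec, vecIm_sub, vecRe_ofReal, vecIm_ofReal, mulVec_add,
      mulVec_sub, mulVec_neg, mulVec_zero, neg_mulVec, mulVec_mulVec, ← mul_assoc, hinv, one_mul,
      one_mulVec]
    abel

theorem statement2_general (n : ℕ) (B : Matrix (Fin n) (Fin n) ℂ)
    (hBim : (matIm B).PosDef) (p q : Fin n → ℂ)
    (P Q : Fin n → ℝ)
    (hP : P = fun i => PJ (JB B) (Sum.elim p q) (Sum.inl i))
    (hQ : Q = fun i => PJ (JB B) (Sum.elim p q) (Sum.inr i)) :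
    (∀ i, ((p + B *ᵥ ((fun j => (Q j : ℂ)) - q)) i).im = 0) ∧
    p + B *ᵥ ((fun j => (Q j : ℂ)) - q) = (fun i => (P i : ℂ)) ∧
    B *ᵥ ((fun j => (Q j : ℂ)) - q) = (fun i => (P i : ℂ)) - p := by
  have hBQ : B *ᵥ ((fun j => (Q j : ℂ)) - q) = (fun i => (P i : ℂ)) - p := by
    subst hP hQ
    exact mulVec_PJ_JB_inr_sub B hBim.isUnit p q
  have hgrad : p + B *ᵥ ((fun j => (Q j : ℂ)) - q) = fun i => (P i : ℂ) := by
    rw [hBQ, add_sub_cancel]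
  exact ⟨fun i => by rw [hgrad]; exact Complex.ofReal_im _, hgrad, hBQ⟩

/-- Let `B` be complex symmetric with `Im B` positive definite, let
`z = (p,q) ∈ ℂⁿ×ℂⁿ` and `(P,Q) := P_{J(B)}(z)`. Then `Q` is a critical point of the
imaginary part of `S(x) = p·(x−q) + ½(x−q)·B(x−q)`, i.e. `Im(p + B(Q−q)) = 0`, the
gradient of `S` at `Q` equals `P`, i.e. `p + B(Q−q) = P`, and hence `B(Q−q) = P − p`. -/
theorem statement2 (n : ℕ) (B : Matrix (Fin n) (Fin n) ℂ)
    (hBsymm : Bᵀ = B) (hBim : (matIm B).PosDef) (p q : Fin n → ℂ)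
    (P Q : Fin n → ℝ)
    (hP : P = fun i => PJ (JB B) (Sum.elim p q) (Sum.inl i))
    (hQ : Q = fun i => PJ (JB B) (Sum.elim p q) (Sum.inr i)) :
    (∀ i, ((p + B *ᵥ ((fun j => (Q j : ℂ)) - q)) i).im = 0) ∧
    p + B *ᵥ ((fun j => (Q j : ℂ)) - q) = (fun i => (P i : ℂ)) ∧
    B *ᵥ ((fun j => (Q j : ℂ)) - q) = (fun i => (P i : ℂ)) - p :=
  statement2_general n B hBim p q P Q hP hQ
end
end

section
/- Let B be a complex symmetric n×n matrix with positive definite imaginary part, and let S = [[S_pp, S_pq],[S_qp, S_qq]] ∈ Sp(2n,ℂ) (n×n block form) be such that S·L_B is a positive Lagrangian subspace. Then the matrix S_qp B + S_qq is invertible, and S·L_B = L_{B'} where B' := (S_pp B + S_pq)(S_qp B + S_qq)⁻¹; in particular B' is symmetric with positive definite imaginary part. -/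
open Matrix

noncomputable section

/-- The complexification of `Ω`. -/
def OmgC (n : ℕ) : Matrix (Fin n ⊕ Fin n) (Fin n ⊕ Fin n) ℂ :=
  (Omg n).map Complex.ofReal

/-- The hermitian form `h(z,z) = (i/2) z·Ω z̄` measuring positivity of Lagrangian
subspaces (the bar is componentwise complex conjugation). -/
def posform {n : ℕ} (z : Fin n ⊕ Fin n → ℂ) : ℂ :=
  (Complex.I / 2) * (z ⬝ᵥ OmgC n *ᵥ star z)

/-- The subset `L_B = {(Bq, q) : q ∈ ℂⁿ}` of `ℂⁿ×ℂⁿ`. -/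
def LBset {n : ℕ} (B : Matrix (Fin n) (Fin n) ℂ) : Set (Fin n ⊕ Fin n → ℂ) :=
  {z | ∃ q : Fin n → ℂ, z = Sum.elim (B *ᵥ q) q}

/-! Write `S·(Bx, x) = (Ax, Cx)` with `A = S_pp B + S_pq`, `C = S_qp B + S_qq`. The positivity
form vanishes on vectors `(p, 0)`, so positivity of `S·L_B` makes `C` injective, hence invertible,
and `S·L_B` is the graph of `B' = A C⁻¹`. Isotropy of that graph is `Aᵀ C = Cᵀ A`, i.e. `B'ᵀ = B'`,
and on a real vector `q` the form evaluates to `q · (Im B') q`. -/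

lemma OmgC_eq_fromBlocks (n : ℕ) : OmgC n = fromBlocks 0 (-1) 1 0 := by
  ext (i | i) (j | j) <;>
    simp [OmgC, Omg, fromBlocks, one_apply, apply_ite Complex.ofReal]

lemma sumElim_dotProduct_OmgC_mulVec_sumElim {n : ℕ} (p q p' q' : Fin n → ℂ) :
    Sum.elim p q ⬝ᵥ OmgC n *ᵥ Sum.elim p' q' = q ⬝ᵥ p' - p ⬝ᵥ q' := by
  rw [OmgC_eq_fromBlocks, fromBlocks_mulVec, sumElim_dotProduct_sumElim]
  simp only [Sum.elim_comp_inl, Sum.elim_comp_inr, zero_mulVec, one_mulVec, neg_mulVec,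
    zero_add, add_zero, dotProduct_neg]
  ring

lemma posform_sumElim {n : ℕ} (p q : Fin n → ℂ) :
    posform (Sum.elim p q) = Complex.I / 2 * (q ⬝ᵥ star p - p ⬝ᵥ star q) := by
  rw [posform, Function.star_sumElim, sumElim_dotProduct_OmgC_mulVec_sumElim]

lemma isUnit_of_posform_pos {n : ℕ} {A C : Matrix (Fin n) (Fin n) ℂ}
    (hpos : ∀ x, x ≠ 0 → 0 < (posform (Sum.elim (A *ᵥ x) (C *ᵥ x))).re) : IsUnit C := by
  refine mulVec_injective_iff_isUnit.1 fun x y hxy => by_contra fun hne => ?_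
  have h := hpos (x - y) (sub_ne_zero.2 hne)
  rw [mulVec_sub C, hxy, sub_self, posform_sumElim] at h
  simp at h

lemma transpose_mul_eq_of_isotropic {n : ℕ} {A C : Matrix (Fin n) (Fin n) ℂ}
    (h : ∀ x x', Sum.elim (A *ᵥ x) (C *ᵥ x) ⬝ᵥ OmgC n *ᵥ Sum.elim (A *ᵥ x') (C *ᵥ x') = 0) :
    Aᵀ * C = Cᵀ * A := by
  ext i j
  have hij := h (Pi.single i 1) (Pi.single j 1)
  rw [sumElim_dotProduct_OmgC_mulVec_sumElim, sub_eq_zero] at hij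
  simpa [mulVec_single, dotProduct, mul_apply] using hij.symm

lemma posform_sumElim_ofReal {n : ℕ} (p : Fin n → ℂ) (v : Fin n → ℝ) :
    posform (Sum.elim p fun i => (v i : ℂ)) = ((v ⬝ᵥ fun i => (p i).im : ℝ) : ℂ) := by
  simp only [posform_sumElim, dotProduct, Pi.star_apply, Complex.star_def, Complex.conj_ofReal,
    ← Finset.sum_sub_distrib, Finset.mul_sum, Complex.ofReal_sum, Complex.ofReal_mul]
  refine Finset.sum_congr rfl fun i _ => ?_
  have hsub := Complex.sub_conj (p i)
  push_cast at hsub ⊢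
  linear_combination (-(v i : ℂ) * Complex.I / 2) * hsub - (v i * (p i).im : ℂ) * Complex.I_sq

lemma matIm_transpose {m k : Type*} (A : Matrix m k ℂ) : matIm Aᵀ = (matIm A)ᵀ := rfl

lemma im_mulVec_ofReal {m k : Type*} [Fintype k] (A : Matrix m k ℂ) (v : k → ℝ) :
    (fun i => (A *ᵥ fun j => (v j : ℂ)) i |>.im) = matIm A *ᵥ v := by
  ext i
  simp [mulVec, dotProduct, matIm, Complex.im_sum]

lemma posDef_matIm_of_posform_pos {n : ℕ} (M : Matrix (Fin n) (Fin n) ℂ) (hM : Mᵀ = M)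
    (hpos : ∀ q : Fin n → ℂ, q ≠ 0 → 0 < (posform (Sum.elim (M *ᵥ q) q)).re) :
    (matIm M).PosDef := by
  refine posDef_iff_dotProduct_mulVec.2 ⟨?_, fun v hv => ?_⟩
  · rw [IsHermitian, conjTranspose_eq_transpose_of_trivial, ← matIm_transpose, hM]
  · have hq : (fun i => (v i : ℂ)) ≠ 0 := fun h =>
      hv (funext fun i => Complex.ofReal_eq_zero.1 (congrFun h i))
    simpa [posform_sumElim_ofReal, im_mulVec_ofReal] using hpos _ hq

lemma mulVec_sumElim_mulVec {m n k R : Type*} [Fintype n] [Fintype k] [CommSemiring R]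
    (S : Matrix (m ⊕ k) (n ⊕ k) R) (B : Matrix n k R) (x : k → R) :
    S *ᵥ Sum.elim (B *ᵥ x) x =
      Sum.elim ((S.toBlocks₁₁ * B + S.toBlocks₁₂) *ᵥ x)
        ((S.toBlocks₂₁ * B + S.toBlocks₂₂) *ᵥ x) := by
  conv_lhs => rw [← fromBlocks_toBlocks S]
  simp only [fromBlocks_mulVec, Sum.elim_comp_inl, Sum.elim_comp_inr, add_mulVec, mulVec_mulVec]

lemma transpose_mul_inv_eq_self {n R : Type*} [Fintype n] [DecidableEq n] [CommRing R]
    {A C : Matrix n n R} (hC : IsUnit C.det) (hAC : Aᵀ * C = Cᵀ * A) :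
    (A * C⁻¹)ᵀ = A * C⁻¹ := by
  rw [transpose_mul, transpose_nonsing_inv]
  calc Cᵀ⁻¹ * Aᵀ = Cᵀ⁻¹ * (Aᵀ * C) * C⁻¹ := by
        rw [← Matrix.mul_assoc, mul_nonsing_inv_cancel_right _ _ hC]
    _ = A * C⁻¹ := by rw [hAC, nonsing_inv_mul_cancel_left _ _ (isUnit_det_transpose _ hC)]

lemma setOf_sumElim_mulVec_eq_LBset {n : ℕ} {A C : Matrix (Fin n) (Fin n) ℂ}
    (hC : IsUnit C.det) : {w | ∃ x, w = Sum.elim (A *ᵥ x) (C *ᵥ x)} = LBset (A * C⁻¹) := by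
  ext w
  constructor
  · rintro ⟨x, rfl⟩
    exact ⟨C *ᵥ x, by rw [mulVec_mulVec, nonsing_inv_mul_cancel_right _ _ hC]⟩
  · rintro ⟨q, rfl⟩
    exact ⟨C⁻¹ *ᵥ q, by rw [mulVec_mulVec, mulVec_mulVec, mul_nonsing_inv _ hC, one_mulVec]⟩

theorem statement11_general (n : ℕ) (B : Matrix (Fin n) (Fin n) ℂ)
    (S : Matrix (Fin n ⊕ Fin n) (Fin n ⊕ Fin n) ℂ)
    (hSLLag : ∀ x x' : Fin n → ℂ,
      (S *ᵥ Sum.elim (B *ᵥ x) x) ⬝ᵥ OmgC n *ᵥ (S *ᵥ Sum.elim (B *ᵥ x') x') = 0)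
    (hSLpos : ∀ x : Fin n → ℂ, x ≠ 0 →
      (posform (S *ᵥ Sum.elim (B *ᵥ x) x)).im = 0 ∧
        0 < (posform (S *ᵥ Sum.elim (B *ᵥ x) x)).re) :
    IsUnit (S.toBlocks₂₁ * B + S.toBlocks₂₂) ∧
    {w | ∃ x : Fin n → ℂ, w = S *ᵥ Sum.elim (B *ᵥ x) x} =
      LBset ((S.toBlocks₁₁ * B + S.toBlocks₁₂) * (S.toBlocks₂₁ * B + S.toBlocks₂₂)⁻¹) ∧
    ((S.toBlocks₁₁ * B + S.toBlocks₁₂) * (S.toBlocks₂₁ * B + S.toBlocks₂₂)⁻¹)ᵀ =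
      (S.toBlocks₁₁ * B + S.toBlocks₁₂) * (S.toBlocks₂₁ * B + S.toBlocks₂₂)⁻¹ ∧
    (matIm ((S.toBlocks₁₁ * B + S.toBlocks₁₂) *
      (S.toBlocks₂₁ * B + S.toBlocks₂₂)⁻¹)).PosDef := by
  simp only [mulVec_sumElim_mulVec] at hSLLag hSLpos ⊢
  set A := S.toBlocks₁₁ * B + S.toBlocks₁₂
  set C := S.toBlocks₂₁ * B + S.toBlocks₂₂
  have hC : IsUnit C := isUnit_of_posform_pos fun x hx => (hSLpos x hx).2
  have hCdet : IsUnit C.det := (isUnit_iff_isUnit_det C).1 hC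
  have hsymm := transpose_mul_inv_eq_self hCdet (transpose_mul_eq_of_isotropic hSLLag)
  refine ⟨hC, setOf_sumElim_mulVec_eq_LBset hCdet, hsymm,
    posDef_matIm_of_posform_pos _ hsymm fun q hq => ?_⟩
  have hCq : C *ᵥ (C⁻¹ *ᵥ q) = q := by rw [mulVec_mulVec, mul_nonsing_inv _ hCdet, one_mulVec]
  have hx : C⁻¹ *ᵥ q ≠ 0 := fun h => hq (by rw [← hCq, h, mulVec_zero])
  simpa only [hCq, mulVec_mulVec] using (hSLpos _ hx).2

/-- Let `B` be complex symmetric with `Im B` positive definite and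
let `S = [[S_pp,S_pq],[S_qp,S_qq]] ∈ Sp(2n,ℂ)` be such that `S·L_B` is a positive
Lagrangian subspace. Then `S_qp B + S_qq` is invertible and `S·L_B = L_{B'}` with
`B' := (S_pp B + S_pq)(S_qp B + S_qq)⁻¹`; in particular `B'` is symmetric with
positive definite imaginary part. -/
theorem statement11 (n : ℕ) (B : Matrix (Fin n) (Fin n) ℂ)
    (hBsymm : Bᵀ = B) (hBim : (matIm B).PosDef)
    (S : Matrix (Fin n ⊕ Fin n) (Fin n ⊕ Fin n) ℂ)
    (hSsymp : Sᵀ * OmgC n * S = OmgC n)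
    (hSLLag : ∀ x x' : Fin n → ℂ,
      (S *ᵥ Sum.elim (B *ᵥ x) x) ⬝ᵥ OmgC n *ᵥ (S *ᵥ Sum.elim (B *ᵥ x') x') = 0)
    (hSLpos : ∀ x : Fin n → ℂ, x ≠ 0 →
      (posform (S *ᵥ Sum.elim (B *ᵥ x) x)).im = 0 ∧
        0 < (posform (S *ᵥ Sum.elim (B *ᵥ x) x)).re) :
    IsUnit (S.toBlocks₂₁ * B + S.toBlocks₂₂) ∧
    {w | ∃ x : Fin n → ℂ, w = S *ᵥ Sum.elim (B *ᵥ x) x} =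
      LBset ((S.toBlocks₁₁ * B + S.toBlocks₁₂) * (S.toBlocks₂₁ * B + S.toBlocks₂₂)⁻¹) ∧
    ((S.toBlocks₁₁ * B + S.toBlocks₁₂) * (S.toBlocks₂₁ * B + S.toBlocks₂₂)⁻¹)ᵀ =
      (S.toBlocks₁₁ * B + S.toBlocks₁₂) * (S.toBlocks₂₁ * B + S.toBlocks₂₂)⁻¹ ∧
    (matIm ((S.toBlocks₁₁ * B + S.toBlocks₁₂) *
      (S.toBlocks₂₁ * B + S.toBlocks₂₂)⁻¹)).PosDef :=
  statement11_general n B S hSLLag hSLpos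
end
end

section
/- Let H : I → M_{2n}(ℂ) be continuous and symmetric-valued on an interval I containing 0, let S : I → M_{2n}(ℂ) solve Ṡ = ΩHS with S(0) = I, and let J₀ be an Ω-compatible complex structure. Suppose A(t) := Re S(t) − (Im S(t)) J₀ is invertible on [0,T). Then A satisfies Ȧ = [Ω Re H − Ω (Im H) J(t)] A where J(t) := A(t) J₀ A(t)⁻¹, and J(t) satisfies the Riccati equation J̇ = Ω(Re H)J − JΩ(Re H) + Ω(Im H) + JΩ(Im H)J with J(0) = J₀. -/
/-!
Write `X = Re S`, `Y = Im S`, so that `A = X - Y J₀`. Since `J₀² = -1`, for any complex `H` the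
matrix `Re (H S) - Im (H S) J₀` equals `Re H · A - Im H · A J₀`, and `A J₀ = J A`; applied to
`Ṡ = ΩHS` this gives `Ȧ = (Ω Re H - Ω Im H · J) A`. Differentiating `J = A J₀ A⁻¹` then turns
`Ȧ = M A` into `J̇ = M J - J M`, which is the Riccati equation once `J² = -1` is used.
-/

open Matrix

noncomputable section

attribute [local instance] Matrix.linftyOpNormedAddCommGroup Matrix.linftyOpNormedSpace
  Matrix.linftyOpNormedRing Matrix.linftyOpNormedAlgebra

section RealImaginaryParts

variable {l m n : Type*}

theorem matRe_mul [Fintype m] (P : Matrix l m ℂ) (Q : Matrix m n ℂ) :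
    matRe (P * Q) = matRe P * matRe Q - matIm P * matIm Q := by
  ext i j
  simp [matRe, matIm, Matrix.mul_apply, Complex.re_sum, Finset.sum_sub_distrib]

theorem matIm_mul [Fintype m] (P : Matrix l m ℂ) (Q : Matrix m n ℂ) :
    matIm (P * Q) = matRe P * matIm Q + matIm P * matRe Q := by
  ext i j
  simp [matRe, matIm, Matrix.mul_apply, Complex.im_sum, Finset.sum_add_distrib]

theorem matRe_map_ofReal_mul [Fintype m] (P : Matrix l m ℝ) (Q : Matrix m n ℂ) :
    matRe (P.map Complex.ofReal * Q) = P * matRe Q := by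
  ext i j
  simp [matRe, Matrix.mul_apply, Complex.re_sum]

theorem matIm_map_ofReal_mul [Fintype m] (P : Matrix l m ℝ) (Q : Matrix m n ℂ) :
    matIm (P.map Complex.ofReal * Q) = P * matIm Q := by
  ext i j
  simp [matIm, Matrix.mul_apply, Complex.im_sum]

theorem matRe_one [DecidableEq m] : matRe (1 : Matrix m m ℂ) = 1 := by
  ext i j; simp [matRe, Matrix.one_apply, apply_ite Complex.re]

theorem matIm_one [DecidableEq m] : matIm (1 : Matrix m m ℂ) = 0 := by
  ext i j; simp [matIm, Matrix.one_apply, apply_ite Complex.im]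

theorem matRe_mul_sub_matIm_mul_mul [Fintype m] [Fintype n] [DecidableEq n] {J₀ : Matrix n n ℝ}
    (hJ₀ : J₀ * J₀ = -1) (H : Matrix l m ℂ) (S : Matrix m n ℂ) :
    matRe (H * S) - matIm (H * S) * J₀ =
      matRe H * (matRe S - matIm S * J₀) - matIm H * (matRe S - matIm S * J₀) * J₀ := by
  simp only [matRe_mul, matIm_mul, Matrix.mul_sub, Matrix.sub_mul, Matrix.add_mul,
    Matrix.mul_assoc, hJ₀, Matrix.mul_neg, Matrix.mul_one]
  abel

end RealImaginaryParts

theorem commutator_sub_mul_eq_of_mul_self_eq_neg_one {R : Type*} [Ring R] {j : R}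
    (hj : j * j = -1) (a b : R) :
    (a - b * j) * j - j * (a - b * j) = a * j - j * a + b + j * b * j := by
  rw [sub_mul, mul_assoc, hj, mul_sub, ← mul_assoc]
  noncomm_ring

section Derivatives

variable {m n : Type*} [Fintype m] [Fintype n] {s : Set ℝ} {t : ℝ}

theorem hasDerivWithinAt_matrix_iff {E : Type*} [NormedAddCommGroup E] [NormedSpace ℝ E]
    [FiniteDimensional ℝ E] {f : ℝ → Matrix m n E} {f' : Matrix m n E} :
    HasDerivWithinAt f f' s t ↔ ∀ i j, HasDerivWithinAt (fun x => f x i j) (f' i j) s t := by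
  let e : Matrix m n E ≃L[ℝ] (m → n → E) :=
    (Matrix.ofLinearEquiv ℝ).symm.toContinuousLinearEquiv
  have he : HasDerivWithinAt (e ∘ f) (e f') s t ↔ _ :=
    hasDerivWithinAt_pi.trans (forall_congr' fun i => hasDerivWithinAt_pi)
  exact Iff.trans ⟨fun h => e.hasFDerivAt.comp_hasDerivWithinAt t h,
    fun h => e.symm.hasFDerivAt.comp_hasDerivWithinAt t h⟩ he

theorem HasDerivWithinAt.matRe {S : ℝ → Matrix m n ℂ} {S' : Matrix m n ℂ}
    (hS : HasDerivWithinAt S S' s t) : HasDerivWithinAt (fun x => matRe (S x)) (matRe S') s t :=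
  hasDerivWithinAt_matrix_iff.2 fun i j =>
    Complex.reCLM.hasFDerivAt.comp_hasDerivWithinAt t (hasDerivWithinAt_matrix_iff.1 hS i j)

theorem HasDerivWithinAt.matIm {S : ℝ → Matrix m n ℂ} {S' : Matrix m n ℂ}
    (hS : HasDerivWithinAt S S' s t) : HasDerivWithinAt (fun x => matIm (S x)) (matIm S') s t :=
  hasDerivWithinAt_matrix_iff.2 fun i j =>
    Complex.imCLM.hasFDerivAt.comp_hasDerivWithinAt t (hasDerivWithinAt_matrix_iff.1 hS i j)

variable [DecidableEq m]

theorem HasDerivWithinAt.matrix_inv {A : ℝ → Matrix m m ℝ} {A' : Matrix m m ℝ}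
    (hA : HasDerivWithinAt A A' s t) (ht : IsUnit (A t)) :
    HasDerivWithinAt (fun x => (A x)⁻¹) (-((A t)⁻¹ * A' * (A t)⁻¹)) s t := by
  obtain ⟨u, hu⟩ := ht
  have h := (hu ▸ hasFDerivAt_ringInverse (𝕜 := ℝ) u).comp_hasDerivWithinAt t hA
  simp only [Matrix.coe_units_inv, hu, Function.comp_def, ← nonsing_inv_eq_ringInverse] at h
  exact h

theorem HasDerivWithinAt.matrix_conj {A : ℝ → Matrix m m ℝ} {M : Matrix m m ℝ}
    (hA : HasDerivWithinAt A (M * A t) s t) (ht : IsUnit (A t)) (J₀ : Matrix m m ℝ) :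
    HasDerivWithinAt (fun x => A x * J₀ * (A x)⁻¹)
      (M * (A t * J₀ * (A t)⁻¹) - A t * J₀ * (A t)⁻¹ * M) s t := by
  have hdet : IsUnit (A t).det := (isUnit_iff_isUnit_det _).1 ht
  have h := (hA.mul_const J₀).mul (hA.matrix_inv ht)
  have e : M * A t * J₀ * (A t)⁻¹ + A t * J₀ * -((A t)⁻¹ * (M * A t) * (A t)⁻¹) =
      M * (A t * J₀ * (A t)⁻¹) - A t * J₀ * (A t)⁻¹ * M := by
    simp only [Matrix.mul_neg, Matrix.mul_assoc, mul_nonsing_inv _ hdet,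
      Matrix.mul_one, sub_eq_add_neg]
  rw [e] at h
  exact h

end Derivatives

theorem statement14_general (n : ℕ) (I : Set ℝ)
    (T : ℝ) (hTI : Set.Ico (0 : ℝ) T ⊆ I)
    (H S : ℝ → Matrix (Fin n ⊕ Fin n) (Fin n ⊕ Fin n) ℂ)
    (hS : ∀ t ∈ I, ∀ i j,
      HasDerivWithinAt (fun s => S s i j) ((OmgC n * H t * S t) i j) I t)
    (hS0 : S 0 = 1)
    (J₀ : Matrix (Fin n ⊕ Fin n) (Fin n ⊕ Fin n) ℝ)
    (hJ₀sq : J₀ * J₀ = -1)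
    (A : ℝ → Matrix (Fin n ⊕ Fin n) (Fin n ⊕ Fin n) ℝ)
    (hA : ∀ t, A t = matRe (S t) - matIm (S t) * J₀)
    (hAinv : ∀ t ∈ Set.Ico (0 : ℝ) T, IsUnit (A t))
    (J : ℝ → Matrix (Fin n ⊕ Fin n) (Fin n ⊕ Fin n) ℝ)
    (hJ : ∀ t, J t = A t * J₀ * (A t)⁻¹) :
    (∀ t ∈ Set.Ico (0 : ℝ) T, ∀ i j,
      HasDerivWithinAt (fun s => A s i j)
        (((Omg n * matRe (H t) - Omg n * matIm (H t) * J t) * A t) i j)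
        (Set.Ico (0 : ℝ) T) t) ∧
    J 0 = J₀ ∧
    ∀ t ∈ Set.Ico (0 : ℝ) T, ∀ i j,
      HasDerivWithinAt (fun s => J s i j)
        ((Omg n * matRe (H t) * J t - J t * (Omg n * matRe (H t)) + Omg n * matIm (H t) +
          J t * (Omg n * matIm (H t)) * J t) i j)
        (Set.Ico (0 : ℝ) T) t := by
  have hdet : ∀ t ∈ Set.Ico (0 : ℝ) T, IsUnit (A t).det := fun t ht =>
    (isUnit_iff_isUnit_det _).1 (hAinv t ht)
  have hAderiv : ∀ t ∈ Set.Ico (0 : ℝ) T, HasDerivWithinAt A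
      ((Omg n * matRe (H t) - Omg n * matIm (H t) * J t) * A t) (Set.Ico 0 T) t := by
    intro t ht
    have hJA : J t * A t = A t * J₀ := by
      rw [hJ t, nonsing_inv_mul_cancel_right _ _ (hdet t ht)]
    have hSt := hasDerivWithinAt_matrix_iff.2 (hS t (hTI ht))
    have h := ((hSt.matRe.sub (hSt.matIm.mul_const J₀)).mono hTI).congr_of_mem
      (fun x _ => hA x) ht
    rw [Matrix.mul_assoc, OmgC, matRe_map_ofReal_mul, matIm_map_ofReal_mul,
      Matrix.mul_assoc (Omg n), ← Matrix.mul_sub, matRe_mul_sub_matIm_mul_mul hJ₀sq, ← hA t,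
      Matrix.mul_assoc (matIm _), ← hJA] at h
    rw [Matrix.sub_mul, Matrix.mul_assoc, Matrix.mul_assoc, Matrix.mul_assoc, ← Matrix.mul_sub]
    exact h
  refine ⟨fun t ht => hasDerivWithinAt_matrix_iff.1 (hAderiv t ht), ?_, fun t ht => ?_⟩
  · rw [hJ, hA, hS0, matRe_one, matIm_one, Matrix.zero_mul, sub_zero, inv_one, Matrix.one_mul,
      Matrix.mul_one]
  · have hJsq : J t * J t = -1 := by
      simp only [hJ t, Matrix.mul_assoc, nonsing_inv_mul_cancel_left _ _ (hdet t ht),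
        ← Matrix.mul_assoc J₀ J₀, hJ₀sq, Matrix.neg_mul, Matrix.one_mul, Matrix.mul_neg,
        mul_nonsing_inv _ (hdet t ht)]
    have h := (hAderiv t ht).matrix_conj (hAinv t ht) J₀
    simp only [← hJ, commutator_sub_mul_eq_of_mul_self_eq_neg_one hJsq] at h
    exact hasDerivWithinAt_matrix_iff.1 h

/-- Let `H` be continuous and symmetric-valued on an interval `I`
containing `0`, let `S` solve `Ṡ = ΩHS`, `S(0) = I`, and let `J₀` be an `Ω`-compatible
complex structure. If `A(t) := Re S(t) − (Im S(t))J₀` is invertible on `[0,T)`, then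
`Ȧ = [Ω Re H − Ω(Im H)J(t)]A` with `J(t) := A(t)J₀A(t)⁻¹`, and `J` satisfies the
Riccati equation `J̇ = Ω(Re H)J − JΩ(Re H) + Ω(Im H) + JΩ(Im H)J`, `J(0) = J₀`. -/
theorem statement14 (n : ℕ) (I : Set ℝ) (hI : I.OrdConnected) (h0I : (0 : ℝ) ∈ I)
    (T : ℝ) (hTI : Set.Ico (0 : ℝ) T ⊆ I)
    (H S : ℝ → Matrix (Fin n ⊕ Fin n) (Fin n ⊕ Fin n) ℂ)
    (hHcont : ∀ i j, ContinuousOn (fun t => H t i j) I)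
    (hHsymm : ∀ t ∈ I, (H t)ᵀ = H t)
    (hS : ∀ t ∈ I, ∀ i j,
      HasDerivWithinAt (fun s => S s i j) ((OmgC n * H t * S t) i j) I t)
    (hS0 : S 0 = 1)
    (J₀ : Matrix (Fin n ⊕ Fin n) (Fin n ⊕ Fin n) ℝ)
    (hJ₀symp : J₀ᵀ * Omg n * J₀ = Omg n) (hJ₀sq : J₀ * J₀ = -1)
    (hJ₀pos : (Omg n * J₀).PosDef)
    (A : ℝ → Matrix (Fin n ⊕ Fin n) (Fin n ⊕ Fin n) ℝ)
    (hA : ∀ t, A t = matRe (S t) - matIm (S t) * J₀)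
    (hAinv : ∀ t ∈ Set.Ico (0 : ℝ) T, IsUnit (A t))
    (J : ℝ → Matrix (Fin n ⊕ Fin n) (Fin n ⊕ Fin n) ℝ)
    (hJ : ∀ t, J t = A t * J₀ * (A t)⁻¹) :
    (∀ t ∈ Set.Ico (0 : ℝ) T, ∀ i j,
      HasDerivWithinAt (fun s => A s i j)
        (((Omg n * matRe (H t) - Omg n * matIm (H t) * J t) * A t) i j)
        (Set.Ico (0 : ℝ) T) t) ∧
    J 0 = J₀ ∧
    ∀ t ∈ Set.Ico (0 : ℝ) T, ∀ i j,
      HasDerivWithinAt (fun s => J s i j)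
        ((Omg n * matRe (H t) * J t - J t * (Omg n * matRe (H t)) + Omg n * matIm (H t) +
          J t * (Omg n * matIm (H t)) * J t) i j)
        (Set.Ico (0 : ℝ) T) t :=
  statement14_general n I T hTI H S hS hS0 J₀ hJ₀sq A hA hAinv J hJ
end
end

section
/- Let γ > 0 and let S ∈ M_{2n}(ℝ) be symmetric, positive definite, and symplectic (SΩS = Ω). Consider the constant Hamiltonian matrix H with Re H = 0 and Im H = −γS. Then for any real symmetric positive definite symplectic matrix G₀ for which tanh(γt)G₀ + S is invertible for all t ≥ 0, the matrix function G(t) := (G₀ + tanh(γt)S)(tanh(γt)G₀ + S)⁻¹ S satisfies G(0) = G₀ and the Riccati equation Ġ = (Re H)ΩG − GΩ(Re H) − Im H + GΩᵀ(Im H)ΩG, i.e. Ġ = γS − γGΩᵀSΩG. In particular the constant function G(t) = S is a solution (the stationary metric), since S = SΩᵀSΩS. -/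
/-!
Write `τ = tanh(γt)`, `A = G₀ + τS`, `M = τG₀ + S`, so that `G = A M⁻¹ S`. Since `τ' = γ(1 - τ²)`,
the product rule and `(M⁻¹)' = -M⁻¹ M' M⁻¹` give `Ġ = γ(1 - τ²)(S M⁻¹ S - A M⁻¹ G₀ M⁻¹ S)`, and
the relation `M M⁻¹ = 1` alone turns this into `γ(S - G S⁻¹ G)`. For symmetric symplectic `S`
one has `S⁻¹ = ΩᵀSΩ`, which gives the stated Riccati equation and the identity `S = SΩᵀSΩS`.
-/

open Matrix

noncomputable section

theorem Real.hasDerivAt_tanh (x : ℝ) : HasDerivAt tanh (1 - tanh x ^ 2) x := by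
  rw [show tanh = sinh / cosh from funext tanh_eq_sinh_div_cosh]
  refine ((hasDerivAt_sinh x).div (hasDerivAt_cosh x) (cosh_pos x).ne').congr_deriv ?_
  rw [Pi.div_apply]
  field_simp

theorem HasDerivAt.ringInverse {𝕜 R : Type*} [NontriviallyNormedField 𝕜] [NormedRing R]
    [NormedAlgebra 𝕜 R] [HasSummableGeomSeries R] {f : 𝕜 → R} {f' : R} {x : 𝕜}
    (hf : HasDerivAt f f' x) (hx : IsUnit (f x)) :
    HasDerivAt (fun y => Ring.inverse (f y))
      (-(Ring.inverse (f x) * f' * Ring.inverse (f x))) x := by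
  obtain ⟨u, hu⟩ := hx
  have := (hasFDerivAt_ringInverse (𝕜 := 𝕜) u).comp_hasDerivAt_of_eq x hf hu
  simpa [← hu, Function.comp_def] using this

/-- With `X = G₀ N`, both sides equal `(1 - τ²) (1 - 2τX - (1 - τ²)X²) S`, because
`(τG₀ + S) N = 1` gives `S N = 1 - τX` and `(G₀ + τS) N = τ + (1 - τ²)X`. -/
theorem tanh_riccati_identity {k R : Type*} [CommRing k] [Ring R] [Algebra k R]
    (τ : k) {G₀ S N : R} (hN : (τ • G₀ + S) * N = 1) :
    (1 - τ ^ 2) • (S * N * S - (G₀ + τ • S) * N * G₀ * N * S) =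
      S - (G₀ + τ • S) * N * ((G₀ + τ • S) * N) * S := by
  have hSN : S * N = 1 - τ • (G₀ * N) := by
    rw [← hN, add_mul, smul_mul_assoc]; abel
  have hAN : (G₀ + τ • S) * N = τ • 1 + (1 - τ ^ 2) • (G₀ * N) := by
    rw [add_mul, smul_mul_assoc, hSN]; module
  rw [hSN, mul_assoc _ G₀, hAN]
  simp only [add_mul, mul_add, sub_mul, smul_mul_assoc, mul_smul_comm, one_mul, mul_one,
    mul_assoc]
  module

def tanhFlow {R : Type*} [Ring R] [Module ℝ R] (γ : ℝ) (G₀ S : R) (t : ℝ) : R :=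
  (G₀ + Real.tanh (γ * t) • S) * Ring.inverse (Real.tanh (γ * t) • G₀ + S) * S

theorem tanhFlow_zero {R : Type*} [Ring R] [Module ℝ R] (γ : ℝ) (G₀ : R) {S : R}
    (hS : IsUnit S) : tanhFlow γ G₀ S 0 = G₀ := by
  simp [tanhFlow, mul_assoc, Ring.inverse_mul_cancel _ hS]

theorem hasDerivAt_tanhFlow {R : Type*} [NormedRing R] [NormedAlgebra ℝ R]
    [HasSummableGeomSeries R] (γ : ℝ) {G₀ S : R} {t : ℝ} (hS : IsUnit S)
    (ht : IsUnit (Real.tanh (γ * t) • G₀ + S)) :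
    HasDerivAt (tanhFlow γ G₀ S)
      (γ • (S - tanhFlow γ G₀ S t * Ring.inverse S * tanhFlow γ G₀ S t)) t := by
  set τ := Real.tanh (γ * t)
  set N := Ring.inverse (τ • G₀ + S)
  have hτ : HasDerivAt (fun s => Real.tanh (γ * s)) (γ * (1 - τ ^ 2)) t :=
    ((Real.hasDerivAt_tanh _).comp t (hasDerivAt_const_mul γ)).congr_deriv (mul_comm _ _)
  have hA := (hτ.smul_const S).const_add G₀
  have hN := ((hτ.smul_const G₀).add_const S).ringInverse ht
  refine ((hA.mul hN).mul_const S).congr_deriv ?_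
  have hquad : tanhFlow γ G₀ S t * Ring.inverse S * tanhFlow γ G₀ S t =
      (G₀ + τ • S) * N * ((G₀ + τ • S) * N) * S := by
    simp only [tanhFlow, mul_assoc, Ring.mul_inverse_cancel_left _ _ hS]
    rfl
  rw [hquad, ← tanh_riccati_identity τ (Ring.mul_inverse_cancel _ ht), smul_smul]
  simp only [smul_mul_assoc, mul_smul_comm, mul_neg, add_mul, neg_mul, smul_sub, mul_assoc]
  abel

theorem Omg_transpose (n : ℕ) : (Omg n)ᵀ = -Omg n := by
  simp [Omg, fromBlocks_transpose, fromBlocks_neg]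

theorem Omg_mul_Omg (n : ℕ) : Omg n * Omg n = -1 := by
  simp [Omg, fromBlocks_multiply, ← fromBlocks_one, fromBlocks_neg]

theorem mul_Omg_transpose_mul_mul_Omg {n : ℕ} {S : Matrix (Fin n ⊕ Fin n) (Fin n ⊕ Fin n) ℝ}
    (hSsymm : Sᵀ = S) (hSsymp : Sᵀ * Omg n * S = Omg n) :
    S * (Omg n)ᵀ * S * Omg n = 1 := by
  rw [hSsymm] at hSsymp
  rw [Omg_transpose, mul_neg, neg_mul, neg_mul, hSsymp, Omg_mul_Omg, neg_neg]

attribute [local instance] Matrix.linftyOpNormedRing Matrix.linftyOpNormedAlgebra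

theorem HasDerivAt.matrix_entry {n : Type*} [Fintype n] [DecidableEq n]
    {f : ℝ → Matrix n n ℝ} {f' : Matrix n n ℝ} {x : ℝ} (hf : HasDerivAt f f' x) (i j : n) :
    HasDerivAt (fun y => f y i j) (f' i j) x :=
  (entryLinearMap ℝ ℝ i j).toContinuousLinearMap.hasFDerivAt.comp_hasDerivAt x hf

theorem statement19_general (n : ℕ) (γ : ℝ)
    (S : Matrix (Fin n ⊕ Fin n) (Fin n ⊕ Fin n) ℝ)
    (hSsymm : Sᵀ = S) (hSsymp : Sᵀ * Omg n * S = Omg n)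
    (G₀ : Matrix (Fin n ⊕ Fin n) (Fin n ⊕ Fin n) ℝ)
    (hinv : ∀ t : ℝ, 0 ≤ t → IsUnit (Real.tanh (γ * t) • G₀ + S))
    (G : ℝ → Matrix (Fin n ⊕ Fin n) (Fin n ⊕ Fin n) ℝ)
    (hG : ∀ t, G t = (G₀ + Real.tanh (γ * t) • S) * (Real.tanh (γ * t) • G₀ + S)⁻¹ * S) :
    G 0 = G₀ ∧
    (∀ t : ℝ, 0 ≤ t → ∀ i j,
      HasDerivWithinAt (fun s => G s i j)
        ((γ • S - γ • (G t * (Omg n)ᵀ * S * Omg n * G t)) i j) (Set.Ici (0 : ℝ)) t) ∧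
    S = S * (Omg n)ᵀ * S * Omg n * S := by
  have hSΩ := mul_Omg_transpose_mul_mul_Omg hSsymm hSsymp
  have hSΩ' : S * ((Omg n)ᵀ * S * Omg n) = 1 := by simpa only [mul_assoc] using hSΩ
  have hS : IsUnit S := (isUnit_iff_isUnit_det S).2 (isUnit_det_of_right_inverse hSΩ')
  have hGflow : G = tanhFlow γ G₀ S :=
    funext fun s => by rw [hG, tanhFlow, nonsing_inv_eq_ringInverse]
  refine ⟨hGflow ▸ tanhFlow_zero γ G₀ hS, fun t ht i j => ?_, by rw [hSΩ, one_mul]⟩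
  have hquad : G t * (Omg n)ᵀ * S * Omg n * G t = G t * Ring.inverse S * G t := by
    rw [← nonsing_inv_eq_ringInverse, inv_eq_right_inv hSΩ']
    simp only [mul_assoc]
  rw [hquad, ← smul_sub, hGflow]
  exact ((hasDerivAt_tanhFlow γ hS (hinv t ht)).matrix_entry i j).hasDerivWithinAt

/-- Let `γ > 0` and `S` be real symmetric, positive definite and
symplectic, and consider the Hamiltonian matrix `H` with `Re H = 0`, `Im H = −γS`.
For any real symmetric positive definite symplectic `G₀` such that `tanh(γt)G₀ + S` is
invertible for all `t ≥ 0`, the matrix function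
`G(t) := (G₀ + tanh(γt)S)(tanh(γt)G₀ + S)⁻¹S` satisfies `G(0) = G₀` and the Riccati
equation `Ġ = γS − γGΩᵀSΩG`. In particular the constant function `G(t) = S` is a
(stationary) solution, since `S = SΩᵀSΩS`. -/
theorem statement19 (n : ℕ) (γ : ℝ) (hγ : 0 < γ)
    (S : Matrix (Fin n ⊕ Fin n) (Fin n ⊕ Fin n) ℝ)
    (hSsymm : Sᵀ = S) (hSpos : S.PosDef) (hSsymp : Sᵀ * Omg n * S = Omg n)
    (G₀ : Matrix (Fin n ⊕ Fin n) (Fin n ⊕ Fin n) ℝ)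
    (hG₀symm : G₀ᵀ = G₀) (hG₀pos : G₀.PosDef) (hG₀symp : G₀ᵀ * Omg n * G₀ = Omg n)
    (hinv : ∀ t : ℝ, 0 ≤ t → IsUnit (Real.tanh (γ * t) • G₀ + S))
    (G : ℝ → Matrix (Fin n ⊕ Fin n) (Fin n ⊕ Fin n) ℝ)
    (hG : ∀ t, G t = (G₀ + Real.tanh (γ * t) • S) * (Real.tanh (γ * t) • G₀ + S)⁻¹ * S) :
    G 0 = G₀ ∧
    (∀ t : ℝ, 0 ≤ t → ∀ i j,
      HasDerivWithinAt (fun s => G s i j)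
        ((γ • S - γ • (G t * (Omg n)ᵀ * S * Omg n * G t)) i j) (Set.Ici (0 : ℝ)) t) ∧
    S = S * (Omg n)ᵀ * S * Omg n * S :=
  statement19_general n γ S hSsymm hSsymp G₀ hinv G hG
end
end
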